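/- Let Σ, Σ̂ be n×n positive definite symmetric matrices with KL(Σ ‖ Σ̂) ≤ ε. Then ‖Σ − Σ̂‖_F ≤ n · λ̄ · ‖Σ̂‖_F, where λ̄ = √(12ε) if 2ε ≤ 1/24 (i.e. ε ≤ 1/48), and λ̄ = 12ε + 1/4 otherwise, is the bound on |λ_max(Σ̂^{-1/2} Σ Σ̂^{-1/2}) − 1| obtained from the KL lower bound at radius 2ε. More concretely: ‖Σ − Σ̂‖_F ≤ ‖Σ̂^{-1/2} Σ Σ̂^{-1/2} − I‖_F · ‖Σ̂‖_F. -/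

import Mathlib

/-!
Whitening by `R = Σ̂^{1/2}` writes `Σ - Σ̂ = R (M - 1) R` with `M = R⁻¹ Σ R⁻¹`. Cyclicity of the
trace turns `‖R B R‖_F²` into the Frobenius inner product of `Σ̂ B` and `B Σ̂`, so Cauchy–Schwarz
and submultiplicativity give `‖Σ - Σ̂‖_F ≤ ‖M - 1‖_F ‖Σ̂‖_F`.

In the eigenvalues `μᵢ` of `M`, `2 KL(Σ ‖ Σ̂) = ∑ᵢ (μᵢ - 1 - log μᵢ)` is a sum of nonnegative
terms, so each is at most `2ε`. This forces `|μᵢ - 1| ≤ 2√(2ε) + 2ε ≤ λ̄`, whence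
`‖M - 1‖_F² = ∑ᵢ (μᵢ - 1)² ≤ n λ̄²`.
-/

open Matrix

/-- Kullback-Leibler divergence between zero-mean Gaussians with covariances `S` and `Shat`. -/
noncomputable def KL {n : ℕ} (S Shat : Matrix (Fin n) (Fin n) ℝ) : ℝ :=
  (1/2) * (-(Real.log S.det) + Real.log Shat.det + (S * Shat⁻¹).trace - n)

/-- Frobenius norm. -/
noncomputable def frobNorm {n : ℕ} (A : Matrix (Fin n) (Fin n) ℝ) : ℝ :=
  Real.sqrt ((Aᵀ * A).trace)

/-- Square root of a positive semidefinite matrix, with the definition Mathlib had in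
December 2024 (since removed from Mathlib). -/
noncomputable def Matrix.PosSemidef.sqrt {n : Type*} [Fintype n] [DecidableEq n]
    {A : Matrix n n ℝ} (hA : A.PosSemidef) : Matrix n n ℝ :=
  hA.1.eigenvectorUnitary.1 * diagonal ((↑) ∘ (√·) ∘ hA.1.eigenvalues) *
  (star hA.1.eigenvectorUnitary : Matrix n n ℝ)

namespace Matrix.PosSemidef

variable {ι : Type*} [Fintype ι] [DecidableEq ι] {A : Matrix ι ι ℝ}

lemma sqrt_eq_conjStarAlgAut (hA : A.PosSemidef) :
    hA.sqrt = Unitary.conjStarAlgAut ℝ _ hA.1.eigenvectorUnitary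
      (diagonal ((↑) ∘ (√·) ∘ hA.1.eigenvalues)) := by
  rw [Unitary.conjStarAlgAut_apply]
  rfl

lemma posSemidef_sqrt (hA : A.PosSemidef) : hA.sqrt.PosSemidef := by
  have hD : (diagonal ((↑) ∘ (√·) ∘ hA.1.eigenvalues) : Matrix ι ι ℝ).PosSemidef :=
    posSemidef_diagonal_iff.mpr fun _ ↦ Real.sqrt_nonneg _
  simpa [sqrt, star_eq_conjTranspose] using
    hD.mul_mul_conjTranspose_same (hA.1.eigenvectorUnitary : Matrix ι ι ℝ)

lemma transpose_sqrt (hA : A.PosSemidef) : hA.sqrtᵀ = hA.sqrt := by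
  rw [← conjTranspose_eq_transpose_of_trivial]
  exact hA.posSemidef_sqrt.isHermitian

lemma sqrt_mul_self (hA : A.PosSemidef) : hA.sqrt * hA.sqrt = A := by
  conv_rhs => rw [hA.1.spectral_theorem]
  rw [sqrt_eq_conjStarAlgAut, ← map_mul, diagonal_mul_diagonal]
  congr 2
  funext i
  simp [Real.mul_self_sqrt (hA.eigenvalues_nonneg i)]

end Matrix.PosSemidef

lemma Matrix.PosDef.isUnit_det_sqrt {ι : Type*} [Fintype ι] [DecidableEq ι]
    {A : Matrix ι ι ℝ} (hA : A.PosDef) : IsUnit hA.posSemidef.sqrt.det := by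
  refine isUnit_iff_ne_zero.mpr fun h ↦ hA.det_pos.ne' ?_
  rw [← hA.posSemidef.sqrt_mul_self, det_mul, h, zero_mul]

section Frobenius

attribute [local instance] Matrix.frobeniusNormedAddCommGroup Matrix.frobeniusNormedRing

variable {n : ℕ}

lemma trace_transpose_mul_eq_sum (A B : Matrix (Fin n) (Fin n) ℝ) :
    (Aᵀ * B).trace = ∑ p : Fin n × Fin n, A p.1 p.2 * B p.1 p.2 := by
  rw [trace, Fintype.sum_prod_type, Finset.sum_comm]
  simp only [diag_apply, mul_apply, transpose_apply]

lemma frobNorm_eq_sqrt_sum (A : Matrix (Fin n) (Fin n) ℝ) :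
    frobNorm A = √(∑ p : Fin n × Fin n, A p.1 p.2 ^ 2) := by
  simp only [frobNorm, trace_transpose_mul_eq_sum, sq]

lemma frobNorm_eq_norm (A : Matrix (Fin n) (Fin n) ℝ) : frobNorm A = ‖A‖ := by
  rw [frobNorm_eq_sqrt_sum, frobenius_norm_def, Real.sqrt_eq_rpow, Fintype.sum_prod_type]
  simp [sq_abs]

lemma frobNorm_nonneg (A : Matrix (Fin n) (Fin n) ℝ) : 0 ≤ frobNorm A :=
  Real.sqrt_nonneg _

lemma frobNorm_mul_le (A B : Matrix (Fin n) (Fin n) ℝ) :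
    frobNorm (A * B) ≤ frobNorm A * frobNorm B := by
  simpa only [frobNorm_eq_norm] using frobenius_norm_mul A B

lemma trace_transpose_mul_le (A B : Matrix (Fin n) (Fin n) ℝ) :
    (Aᵀ * B).trace ≤ frobNorm A * frobNorm B := by
  rw [trace_transpose_mul_eq_sum, frobNorm_eq_sqrt_sum, frobNorm_eq_sqrt_sum]
  exact Real.sum_mul_le_sqrt_mul_sqrt _ _ _

lemma frobNorm_mul_mul_le {R : Matrix (Fin n) (Fin n) ℝ} (hR : Rᵀ = R)
    (B : Matrix (Fin n) (Fin n) ℝ) :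
    frobNorm (R * B * R) ≤ frobNorm B * frobNorm (R * R) := by
  set P := R * R
  have hP : Pᵀ = P := by rw [transpose_mul, hR]
  have htrace : ((R * B * R)ᵀ * (R * B * R)).trace = ((P * B)ᵀ * (B * P)).trace := by
    have hcycle : (R * B * R)ᵀ * (R * B * R) = R * (Bᵀ * P * B * R) := by
      simp only [transpose_mul, hR, P, Matrix.mul_assoc]
    rw [hcycle, trace_mul_comm]
    simp only [transpose_mul, hR, P, Matrix.mul_assoc]
  have hbound : ((P * B)ᵀ * (B * P)).trace ≤ (frobNorm B * frobNorm P) ^ 2 :=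
    calc ((P * B)ᵀ * (B * P)).trace ≤ frobNorm (P * B) * frobNorm (B * P) :=
          trace_transpose_mul_le _ _
      _ ≤ (frobNorm P * frobNorm B) * (frobNorm B * frobNorm P) :=
          mul_le_mul (frobNorm_mul_le _ _) (frobNorm_mul_le _ _) (frobNorm_nonneg _)
            (mul_nonneg (frobNorm_nonneg _) (frobNorm_nonneg _))
      _ = (frobNorm B * frobNorm P) ^ 2 := by ring
  calc frobNorm (R * B * R) ≤ √((frobNorm B * frobNorm P) ^ 2) := by
        rw [frobNorm, htrace]; exact Real.sqrt_le_sqrt hbound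
    _ = frobNorm B * frobNorm P :=
        Real.sqrt_sq (mul_nonneg (frobNorm_nonneg _) (frobNorm_nonneg _))

end Frobenius

namespace Matrix.IsHermitian

variable {n : ℕ} {A : Matrix (Fin n) (Fin n) ℝ}

lemma frobNorm_sub_one (hA : A.IsHermitian) :
    frobNorm (A - 1) = √(∑ i, (hA.eigenvalues i - 1) ^ 2) := by
  have hT : (A - 1)ᵀ = A - 1 := by
    rw [← conjTranspose_eq_transpose_of_trivial]; exact hA.sub isHermitian_one
  rw [frobNorm, hT]
  conv_lhs => rw [hA.spectral_theorem]
  rw [← map_one (Unitary.conjStarAlgAut ℝ _ _), ← map_sub, ← map_mul,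
    Unitary.conjStarAlgAut_apply, trace_mul_cycle, Unitary.coe_star_mul_self, Matrix.one_mul,
    ← diagonal_one, diagonal_sub, diagonal_mul_diagonal, trace_diagonal]
  simp [sq]

lemma frobNorm_sub_one_le (hA : A.IsHermitian) {c : ℝ} (hc : 0 ≤ c)
    (h : ∀ i, |hA.eigenvalues i - 1| ≤ c) : frobNorm (A - 1) ≤ √n * c := by
  have hsum : ∑ i, (hA.eigenvalues i - 1) ^ 2 ≤ n * c ^ 2 := by
    calc ∑ i, (hA.eigenvalues i - 1) ^ 2 ≤ ∑ _i : Fin n, c ^ 2 :=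
          Finset.sum_le_sum fun i _ ↦ sq_le_sq' (abs_le.mp (h i)).1 (abs_le.mp (h i)).2
      _ = n * c ^ 2 := by simp
  rw [hA.frobNorm_sub_one, ← Real.sqrt_sq hc, ← Real.sqrt_mul n.cast_nonneg]
  exact Real.sqrt_le_sqrt hsum

end Matrix.IsHermitian

/-- Since `log x = 2 log √x ≤ 2 (√x - 1)`, the gap `x - 1 - log x` dominates `(√x - 1)²`. -/
lemma abs_sub_one_le_of_sub_one_sub_log_le {x δ : ℝ} (hx : 0 < x) (h : x - 1 - Real.log x ≤ δ) :
    |x - 1| ≤ 2 * √δ + δ := by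
  have hsqrt : 0 < √x := Real.sqrt_pos.mpr hx
  have hsq : √x ^ 2 = x := Real.sq_sqrt hx.le
  have hlog : Real.log x = 2 * Real.log √x := by
    rw [← Real.log_rpow hsqrt, ← hsq]; norm_num
  have hsq_le : (√x - 1) ^ 2 ≤ δ := by
    nlinarith [Real.log_le_sub_one_of_pos hsqrt]
  have hδ : 0 ≤ δ := (sq_nonneg _).trans hsq_le
  have hroot : |√x - 1| ≤ √δ := Real.abs_le_sqrt hsq_le
  have hroot' := abs_le.mp hroot
  rw [abs_le]
  constructor <;> nlinarith [Real.sq_sqrt hδ, Real.sqrt_nonneg δ]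

lemma two_mul_sqrt_two_mul_add_le {ε : ℝ} (hε : 0 ≤ ε) :
    2 * √(2 * ε) + 2 * ε ≤ if ε ≤ 1/48 then √(12 * ε) else 12 * ε + 1/4 := by
  set a := √(2 * ε)
  have ha : 0 ≤ a := Real.sqrt_nonneg _
  have ha2 : a ^ 2 = 2 * ε := Real.sq_sqrt (by linarith)
  split_ifs with hsmall
  · have h12 : √(12 * ε) = √6 * a := by
      rw [← Real.sqrt_mul (by norm_num)]; ring_nf
    have h6 : (12 : ℝ) / 5 ≤ √6 := Real.le_sqrt_of_sq_le (by norm_num)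
    have ha_le : a ≤ 1 / 4 := by nlinarith
    rw [h12]
    nlinarith
  · nlinarith [sq_nonneg (a - 1/5)]

section Whitening

lemma trace_mul_inv_mul_self {n : ℕ} (S R : Matrix (Fin n) (Fin n) ℝ) :
    (S * (R * R)⁻¹).trace = (R⁻¹ * S * R⁻¹).trace := by
  rw [Matrix.mul_inv_rev, ← Matrix.mul_assoc, trace_mul_cycle]

variable {n : ℕ} {S R : Matrix (Fin n) (Fin n) ℝ}

lemma mul_inv_mul_mul_inv_mul (hR : IsUnit R.det) : R * (R⁻¹ * S * R⁻¹) * R = S := by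
  simp only [← Matrix.mul_assoc, mul_nonsing_inv R hR, Matrix.one_mul]
  rw [Matrix.mul_assoc, nonsing_inv_mul R hR, Matrix.mul_one]

lemma Matrix.PosDef.inv_mul_mul_inv (hS : S.PosDef) (hR : Rᵀ = R) (hdet : IsUnit R.det) :
    (R⁻¹ * S * R⁻¹).PosDef := by
  have hRinv : star R⁻¹ = R⁻¹ := by
    rw [star_eq_conjTranspose, conjTranspose_nonsing_inv, conjTranspose_eq_transpose_of_trivial,
      hR]
  simpa only [hRinv] using ((isUnit_iff_isUnit_det _).mpr
    (isUnit_nonsing_inv_det R hdet)).posDef_star_left_conjugate_iff.mpr hS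

lemma KL_mul_self_eq_sum_eigenvalues (hR : IsUnit R.det) (hM : (R⁻¹ * S * R⁻¹).PosDef) :
    KL S (R * R) = 1/2 * ∑ i, (hM.1.eigenvalues i - 1 - Real.log (hM.1.eigenvalues i)) := by
  have hdet : S.det = (R * R).det * ∏ i, hM.1.eigenvalues i := by
    have hdetM : (R⁻¹ * S * R⁻¹).det = ∏ i, hM.1.eigenvalues i := by
      simpa using hM.1.det_eq_prod_eigenvalues
    conv_lhs => rw [← mul_inv_mul_mul_inv_mul (S := S) hR]
    rw [← hdetM, det_mul (R * _), det_mul R _, det_mul R R]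
    ring
  have hdetR : (R * R).det ≠ 0 := by rw [det_mul]; exact mul_ne_zero hR.ne_zero hR.ne_zero
  have hμ (i : Fin n) : hM.1.eigenvalues i ≠ 0 := (hM.eigenvalues_pos i).ne'
  rw [KL, hdet, Real.log_mul hdetR (Finset.prod_ne_zero_iff.mpr fun i _ ↦ hμ i),
    Real.log_prod fun i _ ↦ hμ i, trace_mul_inv_mul_self,
    hM.1.trace_eq_sum_eigenvalues]
  simp only [Finset.sum_sub_distrib, RCLike.ofReal_real_eq_id, id, Finset.sum_const,
    Finset.card_univ, Fintype.card_fin, nsmul_eq_mul, mul_one]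
  ring

lemma abs_eigenvalue_sub_one_le_of_KL_le {ε : ℝ} (hR : IsUnit R.det)
    (hM : (R⁻¹ * S * R⁻¹).PosDef) (hKL : KL S (R * R) ≤ ε) (i : Fin n) :
    |hM.1.eigenvalues i - 1| ≤ 2 * √(2 * ε) + 2 * ε := by
  have hgap : ∀ x : ℝ, 0 < x → 0 ≤ x - 1 - Real.log x := fun x hx ↦ by
    linarith [Real.log_le_sub_one_of_pos hx]
  refine abs_sub_one_le_of_sub_one_sub_log_le (hM.eigenvalues_pos i) ?_
  rw [KL_mul_self_eq_sum_eigenvalues hR hM] at hKL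
  calc _ ≤ ∑ j, (hM.1.eigenvalues j - 1 - Real.log (hM.1.eigenvalues j)) :=
        Finset.single_le_sum (fun j _ ↦ hgap _ (hM.eigenvalues_pos j)) (Finset.mem_univ i)
    _ ≤ 2 * ε := by linarith

end Whitening

open scoped Classical in
theorem stmt_12 {n : ℕ} (ε : ℝ) (hε : 0 ≤ ε) (S Shat : Matrix (Fin n) (Fin n) ℝ)
    (hS : S.PosDef) (hShat : Shat.PosDef)
    (hKL : KL S Shat ≤ ε)
    (lam : ℝ) (hlam : lam = if ε ≤ 1/48 then Real.sqrt (12 * ε) else 12 * ε + 1/4) :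
    frobNorm (S - Shat)
        ≤ frobNorm ((hShat.posSemidef.sqrt)⁻¹ * S * (hShat.posSemidef.sqrt)⁻¹ - 1)
            * frobNorm Shat ∧
    frobNorm (S - Shat) ≤ n * lam * frobNorm Shat := by
  set R := hShat.posSemidef.sqrt
  have hRR : R * R = Shat := hShat.posSemidef.sqrt_mul_self
  have hRdet : IsUnit R.det := hShat.isUnit_det_sqrt
  have hM : (R⁻¹ * S * R⁻¹).PosDef := hS.inv_mul_mul_inv hShat.posSemidef.transpose_sqrt hRdet
  have hfirst : frobNorm (S - Shat) ≤ frobNorm (R⁻¹ * S * R⁻¹ - 1) * frobNorm Shat := by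
    have hdiff : S - Shat = R * (R⁻¹ * S * R⁻¹ - 1) * R := by
      rw [Matrix.mul_sub, Matrix.sub_mul, Matrix.mul_one, mul_inv_mul_mul_inv_mul hRdet, hRR]
    rw [hdiff, ← hRR]
    exact frobNorm_mul_mul_le hShat.posSemidef.transpose_sqrt _
  have hlam_nonneg : 0 ≤ lam := by
    rw [hlam]; split_ifs <;> positivity
  have heig (i : Fin n) : |hM.1.eigenvalues i - 1| ≤ lam :=
    (abs_eigenvalue_sub_one_le_of_KL_le hRdet hM (hRR ▸ hKL) i).trans
      (hlam ▸ two_mul_sqrt_two_mul_add_le hε)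
  refine ⟨hfirst, hfirst.trans (mul_le_mul_of_nonneg_right ?_ (frobNorm_nonneg _))⟩
  calc frobNorm (R⁻¹ * S * R⁻¹ - 1) ≤ √n * lam := hM.1.frobNorm_sub_one_le hlam_nonneg heig
    _ ≤ n * lam := by
        gcongr
        exact Real.sqrt_le_self_iff.mpr (by simpa [Nat.one_le_iff_ne_zero] using eq_or_ne n 0)
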